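/- ℓ1-norm bound for noisy constrained recovery (deterministic form): Let y = x + z with x ∈ S_i, ‖x‖₂ = 1, and ‖z‖₂ ≤ ε. Let X_i have unit columns spanning S_i with inradius r_i, Y_i = X_i + Z_i, and assume ‖Z_i c‖₂ ≤ Kε‖c‖₁ for all c. With γ = 2(1 + K/r_i), the optimal value of min ‖c‖₁ s.t. ‖y − [Y_i Y_{-i}] c‖₂ ≤ γε is at most 1/r_i. -/

import Mathlib

/-!
If `r` is the inradius of the symmetrized hull of the clean columns `Xᵢ`, then `r • x` lies in that
hull, so `x = Xᵢ c` with `‖c‖₁ ≤ 1 / r`. Against the noisy dictionary the pair `(c, 0)` leaves the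
residual `z - Zᵢ c`, of norm at most `ε + Kε / r ≤ γε`; it is therefore feasible, and the optimal
value cannot exceed its cost `‖c‖₁ ≤ 1 / r`.
-/

open scoped BigOperators

/-- Euclidean (ℓ2) norm of a vector. -/
noncomputable def l2 {n : ℕ} (v : Fin n → ℝ) : ℝ := Real.sqrt (∑ i, (v i) ^ 2)

/-- ℓ1 norm of a vector. -/
noncomputable def l1 {n : ℕ} (v : Fin n → ℝ) : ℝ := ∑ i, |v i|

/-- Matrix-vector product, where the matrix is given by its columns. -/
noncomputable def mv {n N : ℕ} (A : Fin N → Fin n → ℝ) (c : Fin N → ℝ) : Fin n → ℝ :=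
  ∑ j, c j • A j

/-- Euclidean inner product. -/
noncomputable def dot {n : ℕ} (v w : Fin n → ℝ) : ℝ := ∑ i, v i * w i

/-- Symmetrized convex hull of the columns of `X`. -/
def symmHull {n N : ℕ} (X : Fin N → Fin n → ℝ) : Set (Fin n → ℝ) :=
  convexHull ℝ (Set.range X ∪ Set.range (fun j => -X j))

section Norms

variable {n : ℕ}

lemma l2_eq_norm_toLp (v : Fin n → ℝ) : l2 v = ‖WithLp.toLp 2 v‖ := by
  simp [l2, EuclideanSpace.norm_eq, sq_abs]

lemma l2_sub_le (v w : Fin n → ℝ) : l2 (v - w) ≤ l2 v + l2 w := by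
  simpa only [l2_eq_norm_toLp, WithLp.toLp_sub] using norm_sub_le _ _

lemma l2_smul (a : ℝ) (v : Fin n → ℝ) : l2 (a • v) = |a| * l2 v := by
  simp only [l2_eq_norm_toLp, WithLp.toLp_smul, norm_smul, Real.norm_eq_abs]

lemma l2_eq_zero {v : Fin n → ℝ} : l2 v = 0 ↔ v = 0 := by
  rw [l2_eq_norm_toLp, norm_eq_zero, WithLp.toLp_eq_zero]

lemma l1_zero : l1 (0 : Fin n → ℝ) = 0 := by
  simp [l1]

lemma l1_smul (a : ℝ) (c : Fin n → ℝ) : l1 (a • c) = |a| * l1 c := by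
  simp [l1, abs_mul, Finset.mul_sum]

lemma l1_add_le (c d : Fin n → ℝ) : l1 (c + d) ≤ l1 c + l1 d := by
  rw [l1, l1, l1, ← Finset.sum_add_distrib]
  exact Finset.sum_le_sum fun i _ => abs_add_le _ _

end Norms

section MatrixVector

variable {n N : ℕ}

lemma mv_zero (A : Fin N → Fin n → ℝ) : mv A 0 = 0 := by
  simp [mv]

lemma mv_smul (A : Fin N → Fin n → ℝ) (a : ℝ) (c : Fin N → ℝ) : mv A (a • c) = a • mv A c := by
  simp [mv, Finset.smul_sum, smul_smul]

lemma mv_add (A : Fin N → Fin n → ℝ) (c d : Fin N → ℝ) : mv A (c + d) = mv A c + mv A d := by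
  simp [mv, add_smul, Finset.sum_add_distrib]

lemma mv_add_columns (A B : Fin N → Fin n → ℝ) (c : Fin N → ℝ) :
    mv (A + B) c = mv A c + mv B c := by
  simp [mv, smul_add, Finset.sum_add_distrib]

lemma exists_mv_eq_of_mem_symmHull {X : Fin N → Fin n → ℝ} {v : Fin n → ℝ}
    (hv : v ∈ symmHull X) : ∃ d, mv X d = v ∧ l1 d ≤ 1 := by
  suffices symmHull X ⊆ {v | ∃ d, mv X d = v ∧ l1 d ≤ 1} from this hv
  refine convexHull_min ?_ ?_
  · rintro v (⟨j, rfl⟩ | ⟨j, rfl⟩)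
    · exact ⟨Pi.single j 1, by simp [mv, Pi.single_apply],
        by simp [l1, Pi.single_apply, apply_ite abs]⟩
    · exact ⟨Pi.single j (-1), by simp [mv, Pi.single_apply, ite_smul],
        by simp [l1, Pi.single_apply, apply_ite abs]⟩
  · rintro v ⟨d, rfl, hd⟩ w ⟨e, rfl, he⟩ a b ha hb hab
    refine ⟨a • d + b • e, by rw [mv_add, mv_smul, mv_smul], ?_⟩
    calc l1 (a • d + b • e) ≤ l1 (a • d) + l1 (b • e) := l1_add_le _ _
      _ = a * l1 d + b * l1 e := by rw [l1_smul, l1_smul, abs_of_nonneg ha, abs_of_nonneg hb]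
      _ ≤ a * 1 + b * 1 := by gcongr
      _ = 1 := by rw [mul_one, mul_one, hab]

lemma exists_mv_eq_l1_le_of_inradius {S : Submodule ℝ (Fin n → ℝ)} {X : Fin N → Fin n → ℝ}
    {r : ℝ} (hr : 0 < r) (hball : ∀ v ∈ S, l2 v ≤ r → v ∈ symmHull X)
    {x : Fin n → ℝ} (hx : x ∈ S) : ∃ c, mv X c = x ∧ l1 c ≤ l2 x / r := by
  by_cases hx0 : l2 x = 0
  · exact ⟨0, by rw [mv_zero, l2_eq_zero.mp hx0], by rw [l1_zero, hx0, zero_div]⟩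
  have hxpos : 0 < l2 x := lt_of_le_of_ne (Real.sqrt_nonneg _) (Ne.symm hx0)
  set s := r / l2 x with hs
  have hspos : 0 < s := div_pos hr hxpos
  have hsx : l2 (s • x) = r := by
    rw [l2_smul, abs_of_pos hspos, hs, div_mul_cancel₀ _ hx0]
  obtain ⟨d, hdx, hd⟩ := exists_mv_eq_of_mem_symmHull (hball _ (S.smul_mem s hx) hsx.le)
  refine ⟨s⁻¹ • d, by rw [mv_smul, hdx, inv_smul_smul₀ hspos.ne'], ?_⟩
  calc l1 (s⁻¹ • d) = s⁻¹ * l1 d := by rw [l1_smul, abs_of_pos (inv_pos.mpr hspos)]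
    _ ≤ s⁻¹ * 1 := by gcongr
    _ = l2 x / r := by rw [mul_one, hs, inv_div]

end MatrixVector

theorem stmt_15_general {n Ni M : ℕ} (S : Submodule ℝ (Fin n → ℝ))
    (Xi Zi : Fin Ni → Fin n → ℝ) (Ymi : Fin M → Fin n → ℝ)
    (r ε K : ℝ) (hr : 0 < r) (hε : 0 < ε) (hK : 0 < K)
    (hball : ∀ v ∈ S, l2 v ≤ r → v ∈ symmHull Xi)
    (Yi : Fin Ni → Fin n → ℝ) (hYi : ∀ j, Yi j = Xi j + Zi j)
    (hZop : ∀ c : Fin Ni → ℝ, l2 (mv Zi c) ≤ K * ε * l1 c)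
    (y x z : Fin n → ℝ) (hy : y = x + z) (hxS : x ∈ S) (hxunit : l2 x = 1)
    (hz : l2 z ≤ ε)
    (γ : ℝ) (hγ : γ = 2 * (1 + K / r))
    (ci : Fin Ni → ℝ) (cmi : Fin M → ℝ)
    (hopt : ∀ (di : Fin Ni → ℝ) (dmi : Fin M → ℝ),
      l2 (y - mv Yi di - mv Ymi dmi) ≤ γ * ε → l1 ci + l1 cmi ≤ l1 di + l1 dmi) :
    l1 ci + l1 cmi ≤ 1 / r := by
  obtain ⟨c, hcx, hc⟩ := exists_mv_eq_l1_le_of_inradius hr hball hxS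
  rw [hxunit] at hc
  have hresidual : y - mv Yi c - mv Ymi 0 = z - mv Zi c := by
    rw [show Yi = Xi + Zi from funext hYi, mv_add_columns, hcx, mv_zero, hy]
    abel
  have hfeas : l2 (y - mv Yi c - mv Ymi 0) ≤ γ * ε := by
    have hKr : 0 ≤ K / r := (div_pos hK hr).le
    calc l2 (y - mv Yi c - mv Ymi 0) ≤ l2 z + l2 (mv Zi c) := hresidual ▸ l2_sub_le _ _
      _ ≤ ε + K * ε * (1 / r) := add_le_add hz ((hZop c).trans (by gcongr))
      _ = (1 + K / r) * ε := by ring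
      _ ≤ γ * ε := by rw [hγ]; gcongr; linarith
  calc l1 ci + l1 cmi ≤ l1 c + l1 (0 : Fin M → ℝ) := hopt c 0 hfeas
    _ = l1 c := by rw [l1_zero, add_zero]
    _ ≤ 1 / r := hc

/-- ℓ1-norm bound for noisy constrained recovery. -/
theorem stmt_15 {n Ni M : ℕ} (S : Submodule ℝ (Fin n → ℝ))
    (Xi Zi : Fin Ni → Fin n → ℝ) (Ymi : Fin M → Fin n → ℝ)
    (hXS : ∀ j, Xi j ∈ S) (hXunit : ∀ j, l2 (Xi j) = 1)
    (hspan : Submodule.span ℝ (Set.range Xi) = S)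
    (r ε K : ℝ) (hr : 0 < r) (hε : 0 < ε) (hK : 0 < K)
    (hball : ∀ v ∈ S, l2 v ≤ r → v ∈ symmHull Xi)
    (Yi : Fin Ni → Fin n → ℝ) (hYi : ∀ j, Yi j = Xi j + Zi j)
    (hZop : ∀ c : Fin Ni → ℝ, l2 (mv Zi c) ≤ K * ε * l1 c)
    (y x z : Fin n → ℝ) (hy : y = x + z) (hxS : x ∈ S) (hxunit : l2 x = 1)
    (hz : l2 z ≤ ε)
    (γ : ℝ) (hγ : γ = 2 * (1 + K / r))
    (ci : Fin Ni → ℝ) (cmi : Fin M → ℝ)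
    (hfeas : l2 (y - mv Yi ci - mv Ymi cmi) ≤ γ * ε)
    (hopt : ∀ (di : Fin Ni → ℝ) (dmi : Fin M → ℝ),
      l2 (y - mv Yi di - mv Ymi dmi) ≤ γ * ε → l1 ci + l1 cmi ≤ l1 di + l1 dmi) :
    l1 ci + l1 cmi ≤ 1 / r :=
  stmt_15_general S Xi Zi Ymi r ε K hr hε hK hball Yi hYi hZop y x z hy hxS hxunit hz γ hγ ci cmi
    hopt
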